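/- Let G be a finite connected graph, {F_1, …, F_k} a c-partition of E(G), and e = uv ∈ F_i. Then for every vertex z ∈ V(G), the following identity of integers holds: d_G(z,u) − d_G(z,v) = d_{G_i}(ℓ_i(z), ℓ_i(u)) − d_{G_i}(ℓ_i(z), ℓ_i(v)), where G_i = G/F_i. -/

import Mathlib

open SimpleGraph

noncomputable section

/-- The Djoković–Winkler relation `Θ` on the edges of a graph `G`:
edges `e = xy` and `f = ab` are related iff
`d(x,a) + d(y,b) ≠ d(x,b) + d(y,a)`. -/
def theta {V : Type*} (G : SimpleGraph V) (e f : Sym2 V) : Prop :=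
  e ∈ G.edgeSet ∧ f ∈ G.edgeSet ∧
    ∃ x y a b : V, e = s(x, y) ∧ f = s(a, b) ∧
      G.dist x a + G.dist y b ≠ G.dist x b + G.dist y a

/-- The quotient graph `G/F`: its vertices are the connected components of
`G − F`, two components being adjacent iff some vertex of one is adjacent in
`G` to some vertex of the other. -/
def quotientGraph {V : Type*} (G : SimpleGraph V) (F : Set (Sym2 V)) :
    SimpleGraph (G.deleteEdges F).ConnectedComponent where
  Adj X Y := X ≠ Y ∧ ∃ x y : V,
    (G.deleteEdges F).connectedComponentMk x = X ∧
    (G.deleteEdges F).connectedComponentMk y = Y ∧ G.Adj x y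
  symm := by
    constructor
    rintro X Y ⟨hne, x, y, hx, hy, hadj⟩
    exact ⟨hne.symm, y, x, hy, hx, hadj.symm⟩
  loopless := by
    constructor
    rintro X ⟨hne, -⟩
    exact hne rfl

/-- `F₁, …, F_k` is a partition of the edge set of `G`. -/
def IsEdgePartition {V : Type*} (G : SimpleGraph V) {k : ℕ}
    (F : Fin k → Set (Sym2 V)) : Prop :=
  (∀ i, F i ⊆ G.edgeSet) ∧ (∀ e ∈ G.edgeSet, ∃ i, e ∈ F i) ∧
    (∀ i j, i ≠ j → Disjoint (F i) (F j))

/-- `F₁, …, F_k` is a c-partition of the edge set of `G`: a partition such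
that every `Θ*`-class (class of the transitive closure of `Θ`) is contained
in some part. -/
def IsCPartition {V : Type*} (G : SimpleGraph V) {k : ℕ}
    (F : Fin k → Set (Sym2 V)) : Prop :=
  IsEdgePartition G F ∧
    ∀ e f : Sym2 V, Relation.TransGen (theta G) e f → ∀ i, e ∈ F i → f ∈ F i

/-- For an edge `e = uv`, `nW G w u v` is `n_u(e|(G,w))`, the sum of the
weights of the vertices strictly closer to `u` than to `v`. -/
def nW {V : Type*} (G : SimpleGraph V) (w : V → NNReal) (u v : V) : NNReal :=
  ∑ᶠ x ∈ {x : V | G.dist x u < G.dist x v}, w x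

/-- The Mostar index of a vertex-edge-weighted graph `(G, w, w')`. -/
def MostarW {V : Type*} (G : SimpleGraph V) (w : V → NNReal)
    (w' : Sym2 V → NNReal) : ℝ :=
  ∑ᶠ e ∈ G.edgeSet, (w' e : ℝ) *
    Sym2.lift ⟨fun u v => |((nW G w u v : ℝ)) - ((nW G w v u : ℝ))|,
      fun _ _ => abs_sub_comm _ _⟩ e

/-- The (unweighted) Mostar index of a graph `G`. -/
def Mostar {V : Type*} (G : SimpleGraph V) : ℝ :=
  ∑ᶠ e ∈ G.edgeSet,
    Sym2.lift ⟨fun u v =>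
      |((Nat.card {x : V | G.dist x u < G.dist x v} : ℝ)) -
        ((Nat.card {x : V | G.dist x v < G.dist x u} : ℝ))|,
      fun _ _ => abs_sub_comm _ _⟩ e


/-!
Call `F ⊆ E(G)` Θ-closed if every edge in Θ-relation with an edge of `F` lies in `F`; a part of a
c-partition is Θ-closed, and so is its complement, since Θ is symmetric. The key fact is that a
geodesic from `x` to `y` uses exactly `d_{G/F}(ℓ x, ℓ y)` edges of a Θ-closed `F`. Projecting a
walk to `G/F` gives `≤`. Conversely, lift a shortest walk of `G/F` to a walk `W` of `G` with at
most that many `F`-edges and compare it with a geodesic `P`. For an `F`-edge `ab`, Θ-closedness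
says exactly that the potential `w ↦ d(w,a) - d(w,b)` does not change across edges outside `F`,
so along any `x`–`y` walk its increments on `F`-edges add up to its total change: this is `2`
for an edge `ab` of `P` and at most `2` in general. The increment of the potential of `ab`
across `pq` equals that of `pq` across `ab`, so double counting over pairs of `F`-edges of `P`
and `W` gives `2|P ∩ F| ≤ 2|W ∩ F|`.

Splitting a geodesic into its `F_i`- and non-`F_i`-edges then gives
`d(z,u) = d_{G/F_i}(ℓ z, ℓ u) + d_{G/F_iᶜ}(ℓ' z, ℓ' u)`, and the second term is the same for
`v`, because `uv` is an edge of `G - F_iᶜ`.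
-/

namespace SimpleGraph

variable {V : Type*} {G : SimpleGraph V}

lemma theta_symm {e f : Sym2 V} (h : theta G e f) : theta G f e := by
  obtain ⟨he, hf, x, y, a, b, rfl, rfl, hne⟩ := h
  refine ⟨hf, he, a, b, x, y, rfl, rfl, ?_⟩
  rwa [dist_comm (u := a), dist_comm (u := b), dist_comm (u := a), dist_comm (u := b),
    add_comm (G.dist y a)]

def IsThetaClosed (G : SimpleGraph V) (F : Set (Sym2 V)) : Prop :=
  ∀ e ∈ F, ∀ f, theta G e f → f ∈ F

lemma IsThetaClosed.compl {F : Set (Sym2 V)} (hF : IsThetaClosed G F) :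
    IsThetaClosed G Fᶜ :=
  fun e he f hef hf => he (hF f hf e (theta_symm hef))

def distDiff (G : SimpleGraph V) (a b w : V) : ℤ := G.dist w a - G.dist w b

lemma abs_distDiff_le_one {a b : V} (hab : G.Adj a b) (w : V) : |distDiff G a b w| ≤ 1 := by
  have h₁ := hab.reachable.dist_triangle_right w
  have h₂ := hab.symm.reachable.dist_triangle_right w
  rw [dist_eq_one_iff_adj.mpr hab] at h₁
  rw [dist_eq_one_iff_adj.mpr hab.symm] at h₂
  rw [distDiff, abs_le]
  omega

lemma distDiff_sub_distDiff_comm (a b p q : V) :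
    distDiff G a b q - distDiff G a b p = distDiff G p q b - distDiff G p q a := by
  simp only [distDiff, dist_comm (u := a), dist_comm (u := b)]
  ring

lemma IsThetaClosed.distDiff_eq_of_notMem {F : Set (Sym2 V)} (hF : IsThetaClosed G F)
    {a b p q : V} (hab : G.Adj a b) (habF : s(a, b) ∈ F) (hpq : G.Adj p q)
    (hpqF : s(p, q) ∉ F) : distDiff G a b p = distDiff G a b q := by
  by_contra hne
  refine hpqF (hF _ habF _ ⟨hab, hpq, a, b, p, q, rfl, rfl, ?_⟩)
  simp only [distDiff, dist_comm (v := a), dist_comm (v := b)] at hne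
  omega

lemma Walk.sum_map_filter_darts_eq_sub {F : Set (Sym2 V)} [DecidablePred (· ∈ F)]
    (f : V → ℤ) (hf : ∀ d : G.Dart, d.edge ∉ F → f d.fst = f d.snd) {x y : V}
    (W : G.Walk x y) :
    ((W.darts.filter (·.edge ∈ F)).map fun d => f d.snd - f d.fst).sum = f y - f x := by
  induction W with
  | nil => simp
  | cons h W ih =>
    by_cases hd : (⟨(_, _), h⟩ : G.Dart).edge ∈ F
    · simp only [darts_cons, List.filter_cons, hd, decide_true, if_true, List.map_cons,
        List.sum_cons, ih]
      ring
    · simp only [darts_cons, List.filter_cons, hd, decide_false, Bool.false_eq_true, if_false,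
        ih, hf _ hd]

lemma Walk.distDiff_of_length_eq_dist {x y : V} {P : G.Walk x y}
    (hP : P.length = G.dist x y) {d : G.Dart} (hd : d ∈ P.darts) :
    distDiff G d.fst d.snd x = -1 ∧ distDiff G d.fst d.snd y = 1 := by
  obtain ⟨p₁, p₂, rfl⟩ := (isSubwalk_toWalk_adj_iff_mem_darts P).mpr hd
  have hP' := (append_assoc p₁ d.adj.toWalk p₂).symm
  have hxa := length_eq_dist_of_subwalk hP (isSubwalk_of_append_left hP')
  have hxb := length_eq_dist_of_subwalk hP (isSubwalk_of_append_left rfl)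
  have hay := length_eq_dist_of_subwalk hP (isSubwalk_of_append_right hP')
  have hby := length_eq_dist_of_subwalk hP (isSubwalk_of_append_right rfl)
  simp only [length_append, Adj.length_toWalk] at hP hxb hay
  simp only [distDiff, dist_comm (u := y)]
  omega

lemma IsThetaClosed.countP_edges_le_of_length_eq_dist {F : Set (Sym2 V)}
    [DecidablePred (· ∈ F)] (hF : IsThetaClosed G F) {x y : V} {P : G.Walk x y}
    (hP : P.length = G.dist x y) (W : G.Walk x y) :
    P.edges.countP (· ∈ F) ≤ W.edges.countP (· ∈ F) := by
  set PF := P.darts.filter (·.edge ∈ F)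
  set WF := W.darts.filter (·.edge ∈ F)
  let δ (d d' : G.Dart) : ℤ := distDiff G d.fst d.snd d'.snd - distDiff G d.fst d.snd d'.fst
  have htele {a b : V} (p : G.Walk a b) (d : G.Dart) (hd : d.edge ∈ F) :
      ((p.darts.filter (·.edge ∈ F)).map (δ d)).sum =
        distDiff G d.fst d.snd b - distDiff G d.fst d.snd a :=
    p.sum_map_filter_darts_eq_sub _ fun d' hd' => hF.distDiff_eq_of_notMem d.adj hd d'.adj hd'
  have hrow : ∀ d ∈ PF, (WF.map (δ d)).sum = 2 := by
    intro d hd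
    obtain ⟨hdP, hdF⟩ := List.mem_filter.mp hd
    obtain ⟨hx, hy⟩ := P.distDiff_of_length_eq_dist hP hdP
    rw [htele W d (of_decide_eq_true hdF), hx, hy]
    norm_num
  have hcol : ∀ d' ∈ WF, (PF.map fun d => δ d d').sum ≤ 2 := by
    intro d' hd'
    have hd'F := of_decide_eq_true (List.mem_filter.mp hd').2
    rw [List.map_congr_left fun d _ => distDiff_sub_distDiff_comm d.fst d.snd d'.fst d'.snd,
      htele P d' hd'F]
    have hx := abs_distDiff_le_one d'.adj x
    have hy := abs_distDiff_le_one d'.adj y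
    rw [abs_le] at hx hy
    omega
  have hcount : 2 * (PF.length : ℤ) ≤ 2 * WF.length :=
    calc 2 * (PF.length : ℤ)
        = (PF.map fun d => (WF.map (δ d)).sum).sum := by
          rw [List.map_congr_left hrow]; simp [mul_comm]
      _ = (WF.map fun d' => (PF.map fun d => δ d d').sum).sum := by
          simpa using Multiset.sum_map_sum_map (PF : Multiset G.Dart) (WF : Multiset G.Dart)
      _ ≤ (WF.map fun _ => (2 : ℤ)).sum := List.sum_le_sum hcol
      _ = 2 * WF.length := by simp [mul_comm]
  simp only [Walk.edges, List.countP_map]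
  simp only [List.countP_eq_length_filter]
  exact_mod_cast (mul_le_mul_iff_right₀ two_pos).mp hcount

section Quotient

variable (F : Set (Sym2 V))

lemma connectedComponentMk_deleteEdges_eq_of_notMem {a c : V} (h : G.Adj a c)
    (hac : s(a, c) ∉ F) :
    (G.deleteEdges F).connectedComponentMk a = (G.deleteEdges F).connectedComponentMk c :=
  ConnectedComponent.connectedComponentMk_eq_of_adj ((deleteEdges_adj ..).mpr ⟨h, hac⟩)

lemma quotientGraph_reachable_of_adj {a c : V} (h : G.Adj a c) :
    (quotientGraph G F).Reachable ((G.deleteEdges F).connectedComponentMk a)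
      ((G.deleteEdges F).connectedComponentMk c) := by
  by_cases hac : (G.deleteEdges F).connectedComponentMk a =
      (G.deleteEdges F).connectedComponentMk c
  · rw [hac]
  · exact Adj.reachable ⟨hac, a, c, rfl, rfl, h⟩

lemma quotientGraph_dist_le_one_of_adj {a c : V} (h : G.Adj a c) :
    (quotientGraph G F).dist ((G.deleteEdges F).connectedComponentMk a)
      ((G.deleteEdges F).connectedComponentMk c) ≤ 1 := by
  by_cases hac : (G.deleteEdges F).connectedComponentMk a =
      (G.deleteEdges F).connectedComponentMk c
  · simp [hac]
  · exact (dist_eq_one_iff_adj.mpr (show (quotientGraph G F).Adj _ _ from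
      ⟨hac, a, c, rfl, rfl, h⟩)).le

lemma Connected.quotientGraph_reachable (hG : G.Connected) (x y : V) :
    (quotientGraph G F).Reachable ((G.deleteEdges F).connectedComponentMk x)
      ((G.deleteEdges F).connectedComponentMk y) := by
  obtain ⟨W⟩ := hG.preconnected x y
  induction W with
  | nil => rfl
  | cons h _ ih => exact (quotientGraph_reachable_of_adj F h).trans ih

variable [DecidablePred (· ∈ F)]

lemma dist_quotientGraph_le_countP_edges {x y : V} (W : G.Walk x y) :
    (quotientGraph G F).dist ((G.deleteEdges F).connectedComponentMk x)
      ((G.deleteEdges F).connectedComponentMk y) ≤ W.edges.countP (· ∈ F) := by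
  induction W with
  | nil => simp
  | @cons a c y h W ih =>
    rw [Walk.edges_cons, List.countP_cons]
    by_cases hac : s(a, c) ∈ F
    · have := (quotientGraph_reachable_of_adj F h).dist_triangle_left
        ((G.deleteEdges F).connectedComponentMk y)
      have := quotientGraph_dist_le_one_of_adj F h
      simp only [hac, decide_true, if_true]
      omega
    · rw [connectedComponentMk_deleteEdges_eq_of_notMem F h hac]
      simpa [hac] using ih

lemma countP_edges_mapLe_deleteEdges {x y : V} (W : (G.deleteEdges F).Walk x y) :
    (W.mapLe (G.deleteEdges_le F)).edges.countP (· ∈ F) = 0 := by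
  rw [Walk.edges_mapLe_eq_edges, List.countP_eq_zero]
  intro e he
  have := W.edges_subset_edgeSet he
  rw [edgeSet_deleteEdges] at this
  simpa using this.2

lemma exists_walk_countP_edges_le_length {X Y : (G.deleteEdges F).ConnectedComponent}
    (w : (quotientGraph G F).Walk X Y) {x y : V}
    (hx : (G.deleteEdges F).connectedComponentMk x = X)
    (hy : (G.deleteEdges F).connectedComponentMk y = Y) :
    ∃ W : G.Walk x y, W.edges.countP (· ∈ F) ≤ w.length := by
  induction w generalizing x with
  | nil =>
    obtain ⟨W⟩ := ConnectedComponent.exact (hx.trans hy.symm)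
    exact ⟨W.mapLe (G.deleteEdges_le F), (countP_edges_mapLe_deleteEdges F W).le⟩
  | cons hadj w ih =>
    obtain ⟨-, p, q, hp, hq, hpq⟩ := id hadj
    obtain ⟨W₁⟩ := ConnectedComponent.exact (hx.trans hp.symm)
    obtain ⟨W₂, hW₂⟩ := ih hq hy
    refine ⟨(W₁.mapLe (G.deleteEdges_le F)).append (.cons hpq W₂), ?_⟩
    rw [Walk.edges_append, List.countP_append, countP_edges_mapLe_deleteEdges,
      Walk.edges_cons, List.countP_cons, Walk.length_cons]
    split <;> omega

lemma Connected.exists_walk_countP_edges_le_dist (hG : G.Connected) (x y : V) :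
    ∃ W : G.Walk x y, W.edges.countP (· ∈ F) ≤
      (quotientGraph G F).dist ((G.deleteEdges F).connectedComponentMk x)
        ((G.deleteEdges F).connectedComponentMk y) := by
  obtain ⟨w, hw⟩ := (hG.quotientGraph_reachable F x y).exists_walk_length_eq_dist
  rw [← hw]
  exact exists_walk_countP_edges_le_length F w rfl rfl

end Quotient

variable {F : Set (Sym2 V)}

theorem IsThetaClosed.countP_edges_eq_dist_quotientGraph [DecidablePred (· ∈ F)]
    (hG : G.Connected) (hF : IsThetaClosed G F) {x y : V} {P : G.Walk x y}
    (hP : P.length = G.dist x y) :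
    P.edges.countP (· ∈ F) = (quotientGraph G F).dist
      ((G.deleteEdges F).connectedComponentMk x) ((G.deleteEdges F).connectedComponentMk y) := by
  obtain ⟨W, hW⟩ := hG.exists_walk_countP_edges_le_dist F x y
  exact le_antisymm ((hF.countP_edges_le_of_length_eq_dist hP W).trans hW)
    (dist_quotientGraph_le_countP_edges F P)

theorem IsThetaClosed.dist_eq_dist_quotientGraph_add_dist_quotientGraph_compl
    (hG : G.Connected) (hF : IsThetaClosed G F) (x y : V) :
    G.dist x y =
      (quotientGraph G F).dist ((G.deleteEdges F).connectedComponentMk x)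
          ((G.deleteEdges F).connectedComponentMk y) +
        (quotientGraph G Fᶜ).dist ((G.deleteEdges Fᶜ).connectedComponentMk x)
          ((G.deleteEdges Fᶜ).connectedComponentMk y) := by
  classical
  obtain ⟨P, hP⟩ := hG.exists_walk_length_eq_dist x y
  rw [← hF.countP_edges_eq_dist_quotientGraph hG hP,
    ← hF.compl.countP_edges_eq_dist_quotientGraph hG hP, ← hP, ← Walk.length_edges,
    List.length_eq_countP_add_countP (· ∈ F)]
  simp

end SimpleGraph

theorem dist_sub_dist_eq_quotient_general {V : Type*} (G : SimpleGraph V)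
    (hG : G.Connected) {k : ℕ} (F : Fin k → Set (Sym2 V))
    (hF : IsCPartition G F) (i : Fin k) (u v : V) (he : s(u, v) ∈ F i)
    (z : V) :
    (G.dist z u : ℤ) - (G.dist z v : ℤ) =
      ((quotientGraph G (F i)).dist
          ((G.deleteEdges (F i)).connectedComponentMk z)
          ((G.deleteEdges (F i)).connectedComponentMk u) : ℤ) -
        ((quotientGraph G (F i)).dist
          ((G.deleteEdges (F i)).connectedComponentMk z)
          ((G.deleteEdges (F i)).connectedComponentMk v) : ℤ) := by
  have hclosed : IsThetaClosed G (F i) := fun e he f hef => hF.2 e f (.single hef) i he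
  have huv := connectedComponentMk_deleteEdges_eq_of_notMem (F i)ᶜ
    (G.mem_edgeSet.mp (hF.1.1 i he)) (not_not.mpr he)
  rw [hclosed.dist_eq_dist_quotientGraph_add_dist_quotientGraph_compl hG z u,
    hclosed.dist_eq_dist_quotientGraph_add_dist_quotientGraph_compl hG z v, huv]
  push_cast
  ring

/-- if `{F₁, …, F_k}` is a c-partition of the edge set of a finite
connected graph `G` and `e = uv ∈ F_i`, then for every vertex `z` one has, in
the integers, `d_G(z,u) − d_G(z,v) = d_{G_i}(ℓ_i(z),ℓ_i(u)) − d_{G_i}(ℓ_i(z),ℓ_i(v))`. -/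
theorem dist_sub_dist_eq_quotient {V : Type*} [Fintype V] (G : SimpleGraph V)
    (hG : G.Connected) {k : ℕ} (F : Fin k → Set (Sym2 V))
    (hF : IsCPartition G F) (i : Fin k) (u v : V) (he : s(u, v) ∈ F i)
    (z : V) :
    (G.dist z u : ℤ) - (G.dist z v : ℤ) =
      ((quotientGraph G (F i)).dist
          ((G.deleteEdges (F i)).connectedComponentMk z)
          ((G.deleteEdges (F i)).connectedComponentMk u) : ℤ) -
        ((quotientGraph G (F i)).dist
          ((G.deleteEdges (F i)).connectedComponentMk z)
          ((G.deleteEdges (F i)).connectedComponentMk v) : ℤ) :=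
  dist_sub_dist_eq_quotient_general G hG F hF i u v he z
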